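/- arXiv:bayes-an/9609001 — 2 statements merged into one kernel-verified Lean document; each statement's English description precedes it below -/
import Mathlib

section
/- Let B, C, D be random vectors and let W be the Moore–Penrose inverse of Var(D). If Cov_D(B,C) = 0 (adjusted orthogonality of B and C given D), then Cov(B,C) = Cov(B,D)·W·Cov(D,C). -/
open MeasureTheory Matrix

variable {Ω : Type*}

/-- The covariance matrix of two random vectors `B` (dimension `m`) and `D` (dimension `n`):
the `(i,j)` entry is `E[Bᵢ·Dⱼ] − E[Bᵢ]·E[Dⱼ]`. -/
noncomputable def cov [MeasurableSpace Ω] (μ : Measure Ω) {m n : ℕ}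
    (B : Fin m → Ω → ℝ) (D : Fin n → Ω → ℝ) : Matrix (Fin m) (Fin n) ℝ :=
  Matrix.of fun i j =>
    (∫ ω, B i ω * D j ω ∂μ) - (∫ ω, B i ω ∂μ) * (∫ ω, D j ω ∂μ)

/-- `W` is a Moore–Penrose inverse of `V`. -/
def IsMoorePenrose {m n : ℕ} (V : Matrix (Fin m) (Fin n) ℝ)
    (W : Matrix (Fin n) (Fin m) ℝ) : Prop :=
  V * W * V = V ∧ W * V * W = W ∧ (V * W)ᵀ = V * W ∧ (W * V)ᵀ = W * V

/-- The adjusted expectation `E_D(B)` (computed with the matrix `W`, intended to be the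
Moore–Penrose inverse of `Var(D)`): the `i`-th component is
`E[Bᵢ] + Σ_j (Cov(B,D)·W)_{ij}·(Dⱼ − E[Dⱼ])`. -/
noncomputable def adjExp [MeasurableSpace Ω] (μ : Measure Ω) {m n : ℕ}
    (B : Fin m → Ω → ℝ) (D : Fin n → Ω → ℝ)
    (W : Matrix (Fin n) (Fin n) ℝ) : Fin m → Ω → ℝ :=
  fun i ω => (∫ ω', B i ω' ∂μ) + ∑ j, (cov μ B D * W) i j * (D j ω - ∫ ω', D j ω' ∂μ)

/-- The adjusted covariance `Cov_D(B,C) = Cov(B − E_D(B), C − E_D(C))`. -/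
noncomputable def adjCov [MeasurableSpace Ω] (μ : Measure Ω) {m p n : ℕ}
    (B : Fin m → Ω → ℝ) (C : Fin p → Ω → ℝ) (D : Fin n → Ω → ℝ)
    (W : Matrix (Fin n) (Fin n) ℝ) : Matrix (Fin m) (Fin p) ℝ :=
  cov μ (fun i ω => B i ω - adjExp μ B D W i ω) (fun j ω => C j ω - adjExp μ C D W j ω)

/-!
Expanding bilinearly, with `P_B = Cov(B,D)·W`,
`Cov_D(B,C) = Cov(B,C) − Cov(B,D)·P_Cᵀ − P_B·Cov(D,C) + P_B·Var(D)·P_Cᵀ`.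
If `Var(D)·x = 0` then `Σ xⱼDⱼ` has variance `0`, so it is a.s. constant and uncorrelated with
every `Bᵢ`: hence `ker Var(D) ⊆ ker Cov(B,D)`, which together with `Var(D)·W·Var(D) = Var(D)`
gives `P_B·Var(D) = Cov(B,D)`. The second and fourth terms then cancel.
-/

open ProbabilityTheory

theorem Matrix.mul_mul_eq_self_of_ker_le {l m R : Type*} [Fintype m] [Ring R]
    {K : Matrix l m R} {V W : Matrix m m R} (hV : V * W * V = V)
    (hker : ∀ x, V *ᵥ x = 0 → K *ᵥ x = 0) : K * W * V = K := by
  refine Matrix.ext_iff_mulVec.mpr fun v => ?_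
  have hv : V *ᵥ ((W * V) *ᵥ v - v) = 0 := by
    rw [mulVec_sub, mulVec_mulVec, ← Matrix.mul_assoc, hV, sub_self]
  rw [← sub_eq_zero, ← hker _ hv, mulVec_sub, mulVec_mulVec, Matrix.mul_assoc]

theorem ProbabilityTheory.covariance_eq_zero_of_variance_eq_zero
    [MeasurableSpace Ω] {μ : Measure Ω} [IsFiniteMeasure μ] {X Y : Ω → ℝ}
    (hY : MemLp Y 2 μ) (h : Var[Y; μ] = 0) : cov[X, Y; μ] = 0 := by
  refine integral_eq_zero_of_ae ?_
  filter_upwards [ae_eq_integral_of_variance_eq_zero hY h] with ω hω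
  simp [hω]

section Covariance

variable [MeasurableSpace Ω] {μ : Measure Ω} {m n p : ℕ}

theorem cov_transpose (B : Fin m → Ω → ℝ) (D : Fin n → Ω → ℝ) :
    (cov μ B D)ᵀ = cov μ D B := by
  ext i j
  simp [cov, mul_comm]

variable [IsProbabilityMeasure μ]

theorem cov_apply_eq_covariance {B : Fin m → Ω → ℝ} {D : Fin n → Ω → ℝ} {i : Fin m} {j : Fin n}
    (hB : MemLp (B i) 2 μ) (hD : MemLp (D j) 2 μ) : cov μ B D i j = cov[B i, D j; μ] := by
  rw [covariance_eq_sub hB hD]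
  rfl

theorem cov_sub_left {B B' : Fin m → Ω → ℝ} {C : Fin p → Ω → ℝ}
    (hB : ∀ i, MemLp (B i) 2 μ) (hB' : ∀ i, MemLp (B' i) 2 μ) (hC : ∀ k, MemLp (C k) 2 μ) :
    cov μ (fun i ω => B i ω - B' i ω) C = cov μ B C - cov μ B' C := by
  ext i k
  rw [Matrix.sub_apply, cov_apply_eq_covariance ((hB i).sub (hB' i)) (hC k),
    cov_apply_eq_covariance (hB i) (hC k), cov_apply_eq_covariance (hB' i) (hC k)]
  exact covariance_fun_sub_left (hB i) (hB' i) (hC k)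

theorem cov_sub_right {B : Fin m → Ω → ℝ} {C C' : Fin p → Ω → ℝ}
    (hB : ∀ i, MemLp (B i) 2 μ) (hC : ∀ k, MemLp (C k) 2 μ) (hC' : ∀ k, MemLp (C' k) 2 μ) :
    cov μ B (fun k ω => C k ω - C' k ω) = cov μ B C - cov μ B C' := by
  rw [← cov_transpose, cov_sub_left hC hC' hB, transpose_sub, cov_transpose, cov_transpose]

theorem cov_mulVec_apply {B : Fin m → Ω → ℝ} {D : Fin n → Ω → ℝ} {i : Fin m}
    (hB : MemLp (B i) 2 μ) (hD : ∀ j, MemLp (D j) 2 μ) (x : Fin n → ℝ) :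
    (cov μ B D *ᵥ x) i = cov[B i, fun ω => ∑ j, x j * D j ω; μ] := by
  simp only [mulVec, dotProduct]
  rw [covariance_fun_sum_right (fun j => (hD j).const_mul _) hB]
  refine Finset.sum_congr rfl fun j _ => ?_
  rw [covariance_const_mul_right, cov_apply_eq_covariance hB (hD j), mul_comm]

theorem cov_mulVec_eq_zero_of_mulVec_eq_zero {B : Fin m → Ω → ℝ} {D : Fin n → Ω → ℝ}
    (hB : ∀ i, MemLp (B i) 2 μ) (hD : ∀ j, MemLp (D j) 2 μ) {x : Fin n → ℝ}
    (hx : cov μ D D *ᵥ x = 0) : cov μ B D *ᵥ x = 0 := by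
  have hS : MemLp (fun ω => ∑ j, x j * D j ω) 2 μ := memLp_finsetSum _ fun j _ => (hD j).const_mul _
  have hVarS : Var[fun ω => ∑ j, x j * D j ω; μ] = 0 := by
    rw [← covariance_self hS.aemeasurable, covariance_fun_sum_left (fun j => (hD j).const_mul _) hS]
    simp_rw [covariance_const_mul_left, ← cov_mulVec_apply (hD _) hD, hx]
    simp
  funext i
  rw [cov_mulVec_apply (hB i) hD, Pi.zero_apply]
  exact covariance_eq_zero_of_variance_eq_zero hS hVarS

theorem memLp_adjExp (B : Fin m → Ω → ℝ) {D : Fin n → Ω → ℝ} (hD : ∀ j, MemLp (D j) 2 μ)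
    (W : Matrix (Fin n) (Fin n) ℝ) (i : Fin m) : MemLp (adjExp μ B D W i) 2 μ := by
  have hsum : MemLp (fun ω => ∑ j, (cov μ B D * W) i j * (D j ω - ∫ ω', D j ω' ∂μ)) 2 μ :=
    memLp_finsetSum _ fun j _ => ((hD j).sub (memLp_const _)).const_mul _
  exact (memLp_const (∫ ω, B i ω ∂μ)).add hsum

theorem cov_adjExp_left (B : Fin m → Ω → ℝ) {D : Fin n → Ω → ℝ} {X : Fin p → Ω → ℝ}
    (hD : ∀ j, MemLp (D j) 2 μ) (hX : ∀ k, MemLp (X k) 2 μ) (W : Matrix (Fin n) (Fin n) ℝ) :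
    cov μ (adjExp μ B D W) X = cov μ B D * W * cov μ D X := by
  ext i k
  have hterm : ∀ j, MemLp (fun ω => (cov μ B D * W) i j * (D j ω - ∫ ω', D j ω' ∂μ)) 2 μ :=
    fun j => ((hD j).sub (memLp_const _)).const_mul _
  rw [cov_apply_eq_covariance (memLp_adjExp B hD W i) (hX k)]
  unfold adjExp
  rw [covariance_const_add_left ((memLp_finsetSum _ fun j _ => hterm j).integrable one_le_two),
    covariance_fun_sum_left hterm (hX k), Matrix.mul_apply]
  refine Finset.sum_congr rfl fun j _ => ?_
  rw [covariance_const_mul_left, covariance_sub_const_left ((hD j).integrable one_le_two),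
    cov_apply_eq_covariance (hD j) (hX k)]

theorem cov_adjExp_right {X : Fin m → Ω → ℝ} (C : Fin p → Ω → ℝ) {D : Fin n → Ω → ℝ}
    (hD : ∀ j, MemLp (D j) 2 μ) (hX : ∀ i, MemLp (X i) 2 μ) (W : Matrix (Fin n) (Fin n) ℝ) :
    cov μ X (adjExp μ C D W) = cov μ X D * (cov μ C D * W)ᵀ := by
  rw [← cov_transpose, cov_adjExp_left C hD hX, transpose_mul, cov_transpose]

theorem adjCov_eq {B : Fin m → Ω → ℝ} {C : Fin p → Ω → ℝ} {D : Fin n → Ω → ℝ}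
    (hB : ∀ i, MemLp (B i) 2 μ) (hC : ∀ k, MemLp (C k) 2 μ) (hD : ∀ j, MemLp (D j) 2 μ)
    (W : Matrix (Fin n) (Fin n) ℝ) :
    adjCov μ B C D W = cov μ B C - cov μ B D * (cov μ C D * W)ᵀ - cov μ B D * W * cov μ D C
      + cov μ B D * W * cov μ D D * (cov μ C D * W)ᵀ := by
  have hEB := memLp_adjExp B hD W
  have hEC := memLp_adjExp C hD W
  rw [adjCov, cov_sub_left (C := fun k ω => C k ω - adjExp μ C D W k ω) hB hEB
      fun k => (hC k).sub (hEC k), cov_sub_right hB hC hEC,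
    cov_sub_right hEB hC hEC, cov_adjExp_right C hD hB, cov_adjExp_left B hD hC,
    cov_adjExp_left B hD hEC, cov_adjExp_right C hD hD, Matrix.mul_assoc _ (cov μ D D)]
  abel

theorem adjCov_eq_cov_sub {B : Fin m → Ω → ℝ} {C : Fin p → Ω → ℝ} {D : Fin n → Ω → ℝ}
    (hB : ∀ i, MemLp (B i) 2 μ) (hC : ∀ k, MemLp (C k) 2 μ) (hD : ∀ j, MemLp (D j) 2 μ)
    {W : Matrix (Fin n) (Fin n) ℝ} (hW : cov μ D D * W * cov μ D D = cov μ D D) :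
    adjCov μ B C D W = cov μ B C - cov μ B D * W * cov μ D C := by
  have hproj : cov μ B D * W * cov μ D D = cov μ B D :=
    mul_mul_eq_self_of_ker_le hW fun _ => cov_mulVec_eq_zero_of_mulVec_eq_zero hB hD
  rw [adjCov_eq hB hC hD, hproj]
  abel

end Covariance

/-- Lemma 2 of the paper: if `Cov_D(B,C) = 0` then
`Cov(B,C) = Cov(B,D)·W·Cov(D,C)`, where `W` is the Moore–Penrose inverse of `Var(D)`. -/
theorem cov_eq_of_adjOrth [MeasurableSpace Ω] (μ : Measure Ω) [IsProbabilityMeasure μ]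
    {m p n : ℕ} (B : Fin m → Ω → ℝ) (C : Fin p → Ω → ℝ) (D : Fin n → Ω → ℝ)
    (hB : ∀ i, Measurable (B i) ∧ MemLp (B i) 2 μ)
    (hC : ∀ i, Measurable (C i) ∧ MemLp (C i) 2 μ)
    (hD : ∀ i, Measurable (D i) ∧ MemLp (D i) 2 μ)
    (W : Matrix (Fin n) (Fin n) ℝ) (hW : IsMoorePenrose (cov μ D D) W)
    (horth : adjCov μ B C D W = 0) :
    cov μ B C = cov μ B D * W * cov μ D C := by
  rw [adjCov_eq_cov_sub (fun i => (hB i).2) (fun k => (hC k).2) (fun j => (hD j).2) hW.1] at horth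
  exact sub_eq_zero.mp horth
end

section
/- Let B and D be random vectors, W the Moore–Penrose inverse of Var(D), and U the Moore–Penrose inverse of Var(B). Let A be a real m×m matrix with Var(B) = A·Aᵀ, and let A⁺ be the Moore–Penrose inverse of A. Then the expected size of the adjustment equals the trace of the belief transform: E[ Σ_i ( (A⁺·(E_D(B) − E[B]))_i )² ] = trace(T_D(B)), where E_D(B) − E[B] is the random vector with i-th component Σ_j (P_D(B))_{ij}·(D_j − E[D_j]). -/
open MeasureTheory Matrix

variable {Ω : Type*}

/-!
With `X = D − E[D]` and `P = Cov(B,D)·W`, the adjustment is `P X`, so the expected size is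
`E‖A⁺ P X‖² = trace (A⁺ P Var(D) Pᵀ A⁺ᵀ)`. Moore–Penrose inverses are unique, so `W` is symmetric
(as `Var(D)` is) and `A⁺ᵀ A⁺ = U` (it is a Moore–Penrose inverse of `A Aᵀ = Var(B)`). Then
`P Var(D) Pᵀ = Cov(B,D) W Var(D) W Cov(D,B) = Cov(B,D) W Cov(D,B)`, and cycling the trace gives
`trace (Cov(B,D) W Cov(D,B) U)`.
-/

namespace IsMoorePenrose

variable {m n : ℕ} {V : Matrix (Fin m) (Fin n) ℝ} {W : Matrix (Fin n) (Fin m) ℝ}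

lemma transpose (h : IsMoorePenrose V W) : IsMoorePenrose Vᵀ Wᵀ := by
  obtain ⟨hVWV, hWVW, hVW, hWV⟩ := h
  refine ⟨?_, ?_, ?_, ?_⟩
  · rw [← transpose_mul, ← transpose_mul, ← Matrix.mul_assoc, hVWV]
  · rw [← transpose_mul, ← transpose_mul, ← Matrix.mul_assoc, hWVW]
  · rw [← transpose_mul, hWV, hWV]
  · rw [← transpose_mul, hVW, hVW]

/-- Penrose's uniqueness argument: `V * W` and `W * V` are determined by `V` alone. -/
lemma unique {W₁ W₂ : Matrix (Fin n) (Fin m) ℝ}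
    (h₁ : IsMoorePenrose V W₁) (h₂ : IsMoorePenrose V W₂) : W₁ = W₂ := by
  obtain ⟨a₁, b₁, c₁, d₁⟩ := h₁
  obtain ⟨a₂, b₂, c₂, d₂⟩ := h₂
  have hVW : V * W₁ = V * W₂ := by
    calc V * W₁ = (V * W₂ * V * W₁)ᵀ := by rw [a₂, c₁]
      _ = (V * W₁)ᵀ * (V * W₂)ᵀ := by rw [← transpose_mul, Matrix.mul_assoc]
      _ = V * W₂ := by rw [c₁, c₂, ← Matrix.mul_assoc, a₁]
  have hWV : W₁ * V = W₂ * V := by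
    calc W₁ * V = (W₁ * (V * W₂ * V))ᵀ := by rw [a₂, d₁]
      _ = (W₂ * V)ᵀ * (W₁ * V)ᵀ := by rw [← transpose_mul]; simp only [Matrix.mul_assoc]
      _ = W₂ * V := by rw [d₁, d₂, Matrix.mul_assoc, ← Matrix.mul_assoc V, a₁]
  calc W₁ = W₁ * (V * W₁) := by rw [← Matrix.mul_assoc, b₁]
    _ = W₂ * V * W₂ := by rw [hVW, ← Matrix.mul_assoc, hWV]
    _ = W₂ := b₂

lemma isSymm {V : Matrix (Fin m) (Fin m) ℝ} {W : Matrix (Fin m) (Fin m) ℝ}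
    (h : IsMoorePenrose V W) (hV : V.IsSymm) : W.IsSymm :=
  (hV ▸ h.transpose).unique h

lemma mul_transpose_self {A : Matrix (Fin m) (Fin n) ℝ} {A' : Matrix (Fin n) (Fin m) ℝ}
    (h : IsMoorePenrose A A') : IsMoorePenrose (A * Aᵀ) (A'ᵀ * A') := by
  obtain ⟨hAA'A, hA'AA', hAA', hA'A⟩ := h
  have hA'AAt : A' * A * Aᵀ = Aᵀ := by
    rw [← hA'A, ← transpose_mul, ← Matrix.mul_assoc, hAA'A]
  have hleft : A * Aᵀ * (A'ᵀ * A') = A * A' := by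
    rw [Matrix.mul_assoc, ← Matrix.mul_assoc Aᵀ, ← transpose_mul, hA'A, ← Matrix.mul_assoc,
      ← Matrix.mul_assoc, hAA'A]
  have hright : A'ᵀ * A' * (A * Aᵀ) = A * A' := by
    rw [Matrix.mul_assoc, ← Matrix.mul_assoc A', hA'AAt, ← transpose_mul, hAA']
  refine ⟨?_, ?_, ?_, ?_⟩
  · rw [hleft, ← Matrix.mul_assoc, hAA'A]
  · rw [Matrix.mul_assoc, hleft, Matrix.mul_assoc, ← Matrix.mul_assoc A', hA'AA']
  · rw [hleft, hAA']
  · rw [hright, hAA']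

end IsMoorePenrose

section Covariance

variable [MeasurableSpace Ω] (μ : Measure Ω)

lemma transpose_cov {m n : ℕ} (B : Fin m → Ω → ℝ) (D : Fin n → Ω → ℝ) :
    (cov μ B D)ᵀ = cov μ D B := by
  ext i j
  simp only [cov, transpose_apply, of_apply, mul_comm]

lemma isSymm_cov {n : ℕ} (D : Fin n → Ω → ℝ) : (cov μ D D).IsSymm :=
  transpose_cov μ D D

noncomputable def centered {n : ℕ} (D : Fin n → Ω → ℝ) (ω : Ω) : Fin n → ℝ :=
  fun j => D j ω - ∫ ω', D j ω' ∂μ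

section Finite

variable [IsFiniteMeasure μ]

lemma memLp_centered {n : ℕ} {D : Fin n → Ω → ℝ} (hD : ∀ j, MemLp (D j) 2 μ) (j : Fin n) :
    MemLp (fun ω => centered μ D ω j) 2 μ :=
  (hD j).sub (memLp_const _)

lemma memLp_dotProduct_centered {n : ℕ} {D : Fin n → Ω → ℝ} (hD : ∀ j, MemLp (D j) 2 μ)
    (c : Fin n → ℝ) : MemLp (fun ω => c ⬝ᵥ centered μ D ω) 2 μ :=
  memLp_finsetSum _ fun j _ => (memLp_centered μ hD j).const_mul (c j)

end Finite

variable [IsProbabilityMeasure μ]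

lemma integral_centered_mul_centered {m n : ℕ} {B : Fin m → Ω → ℝ} {D : Fin n → Ω → ℝ}
    (hB : ∀ i, MemLp (B i) 2 μ) (hD : ∀ j, MemLp (D j) 2 μ) (i : Fin m) (j : Fin n) :
    ∫ ω, centered μ B ω i * centered μ D ω j ∂μ = cov μ B D i j :=
  ProbabilityTheory.covariance_eq_sub (hB i) (hD j)

lemma integral_dotProduct_centered_sq {n : ℕ} {D : Fin n → Ω → ℝ}
    (hD : ∀ j, MemLp (D j) 2 μ) (c : Fin n → ℝ) :
    ∫ ω, (c ⬝ᵥ centered μ D ω) ^ 2 ∂μ = c ⬝ᵥ (cov μ D D *ᵥ c) := by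
  have hprod (j k : Fin n) : Integrable (fun ω => c j * c k *
      (centered μ D ω j * centered μ D ω k)) μ :=
    ((memLp_centered μ hD j).integrable_mul (memLp_centered μ hD k)).const_mul _
  calc ∫ ω, (c ⬝ᵥ centered μ D ω) ^ 2 ∂μ
      = ∫ ω, ∑ j, ∑ k, c j * c k * (centered μ D ω j * centered μ D ω k) ∂μ := by
        congr 1 with ω
        rw [sq, dotProduct, Finset.sum_mul_sum]
        exact Finset.sum_congr rfl fun j _ => Finset.sum_congr rfl fun k _ => by ring
    _ = ∑ j, ∑ k, c j * c k * cov μ D D j k := by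
        rw [integral_finsetSum _ fun j _ => integrable_finsetSum _ fun k _ => hprod j k]
        refine Finset.sum_congr rfl fun j _ => ?_
        rw [integral_finsetSum _ fun k _ => hprod j k]
        refine Finset.sum_congr rfl fun k _ => ?_
        rw [integral_const_mul, integral_centered_mul_centered μ hD hD]
    _ = c ⬝ᵥ (cov μ D D *ᵥ c) := by
        simp only [dotProduct, mulVec, Finset.mul_sum]
        exact Finset.sum_congr rfl fun j _ => Finset.sum_congr rfl fun k _ => by ring

lemma integral_sum_sq_mulVec_centered {k n : ℕ} {D : Fin n → Ω → ℝ}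
    (hD : ∀ j, MemLp (D j) 2 μ) (M : Matrix (Fin k) (Fin n) ℝ) :
    ∫ ω, ∑ i, (M *ᵥ centered μ D ω) i ^ 2 ∂μ = trace (M * cov μ D D * Mᵀ) := by
  have hsq (i : Fin k) : Integrable (fun ω => (M *ᵥ centered μ D ω) i ^ 2) μ :=
    (memLp_dotProduct_centered μ hD (M i)).integrable_sq
  rw [integral_finsetSum _ fun i _ => hsq i]
  simp only [mulVec, integral_dotProduct_centered_sq μ hD]
  simp only [trace, diag, mul_apply', dotProduct, mulVec, Finset.mul_sum, Finset.sum_mul,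
    transpose_apply]
  refine Finset.sum_congr rfl fun i _ => ?_
  rw [Finset.sum_comm]
  exact Finset.sum_congr rfl fun j _ => Finset.sum_congr rfl fun l _ => by ring

end Covariance

theorem expected_size_eq_trace_general [MeasurableSpace Ω] (μ : Measure Ω) [IsProbabilityMeasure μ]
    {m n : ℕ} (B : Fin m → Ω → ℝ) (D : Fin n → Ω → ℝ)
    (hD : ∀ i, Measurable (D i) ∧ MemLp (D i) 2 μ)
    (W : Matrix (Fin n) (Fin n) ℝ) (hW : IsMoorePenrose (cov μ D D) W)
    (U : Matrix (Fin m) (Fin m) ℝ) (hU : IsMoorePenrose (cov μ B B) U)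
    (A : Matrix (Fin m) (Fin m) ℝ) (hA : cov μ B B = A * Aᵀ)
    (Aplus : Matrix (Fin m) (Fin m) ℝ) (hAplus : IsMoorePenrose A Aplus) :
    (∫ ω, ∑ i,
        (Aplus *ᵥ fun k => ∑ j, (cov μ B D * W) k j * (D j ω - ∫ ω', D j ω' ∂μ)) i ^ 2 ∂μ) =
      Matrix.trace (cov μ B D * W * (cov μ D B * U)) := by
  set P := cov μ B D * W
  have hWsymm : Wᵀ = W := hW.isSymm (isSymm_cov μ D)
  have hU' : U = Aplusᵀ * Aplus := hU.unique (hA ▸ hAplus.mul_transpose_self)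
  have hPVP : P * cov μ D D * Pᵀ = cov μ B D * W * cov μ D B := by
    rw [transpose_mul, hWsymm, transpose_cov, Matrix.mul_assoc (cov μ B D) W,
      Matrix.mul_assoc (cov μ B D), ← Matrix.mul_assoc (W * cov μ D D), hW.2.1,
      ← Matrix.mul_assoc]
  calc _ = ∫ ω, ∑ i, ((Aplus * P) *ᵥ centered μ D ω) i ^ 2 ∂μ := by
        simp only [← mulVec_mulVec]; rfl
    _ = trace (Aplus * (P * cov μ D D * Pᵀ * Aplusᵀ)) := by
        rw [integral_sum_sq_mulVec_centered μ fun j => (hD j).2, transpose_mul]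
        simp only [Matrix.mul_assoc]
    _ = trace (P * (cov μ D B * U)) := by
        rw [trace_mul_comm, hPVP, hU']
        simp only [P, Matrix.mul_assoc]

/-- the expected size of the adjustment equals the trace of the belief
transform: `E[‖A⁺·(E_D(B) − E[B])‖²] = trace(T_D(B))`, where `Var(B) = A·Aᵀ`, `A⁺` is the
Moore–Penrose inverse of `A`, `W` is the Moore–Penrose inverse of `Var(D)`, `U` is the
Moore–Penrose inverse of `Var(B)`, and `T_D(B) = P_D(B)·P_B(D) = Cov(B,D)·W·Cov(D,B)·U`. -/
theorem expected_size_eq_trace [MeasurableSpace Ω] (μ : Measure Ω) [IsProbabilityMeasure μ]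
    {m n : ℕ} (B : Fin m → Ω → ℝ) (D : Fin n → Ω → ℝ)
    (hB : ∀ i, Measurable (B i) ∧ MemLp (B i) 2 μ)
    (hD : ∀ i, Measurable (D i) ∧ MemLp (D i) 2 μ)
    (W : Matrix (Fin n) (Fin n) ℝ) (hW : IsMoorePenrose (cov μ D D) W)
    (U : Matrix (Fin m) (Fin m) ℝ) (hU : IsMoorePenrose (cov μ B B) U)
    (A : Matrix (Fin m) (Fin m) ℝ) (hA : cov μ B B = A * Aᵀ)
    (Aplus : Matrix (Fin m) (Fin m) ℝ) (hAplus : IsMoorePenrose A Aplus) :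
    (∫ ω, ∑ i,
        (Aplus *ᵥ fun k => ∑ j, (cov μ B D * W) k j * (D j ω - ∫ ω', D j ω' ∂μ)) i ^ 2 ∂μ) =
      Matrix.trace (cov μ B D * W * (cov μ D B * U)) :=
  expected_size_eq_trace_general μ B D hD W hW U hU A hA Aplus hAplus
end
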